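/- For every n ≥ 2, if A and B are subsets of P both satisfying condition (H1) in the incidence geometry G_n and A is a proper subset of B, then (3/8)·4^n ≤ |B \ A|. -/

import Mathlib

/-! Let `f : V_n → 𝔽₂` be the indicator of `B \ A`. Condition (H1) says that every line
`{a, b, a + b}` meets `A`, and meets `B`, in an odd number of points, so
`f (a + b) = f a + f b` whenever `⟨a, b⟩ = 0`. Passing between pairs with `⟨a, b⟩ = 1`
through common partners shows that `f (a + b) - f a - f b = c ⟨a, b⟩` for a constant `c`:
`f` is either linear or a quadratic form polarizing to the symplectic form. The character
sum `S = ∑ₓ (-1)^(f x)` vanishes in the first case and satisfies `S² = 4^n` in the second,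
because `⟨·,·⟩` is nondegenerate. Since `S = 4^n - 2 |B \ A|`, this gives
`2 |B \ A| ≥ 4^n - 2^n ≥ (3/4) 4^n` for `n ≥ 2`. -/

/-- The symplectic vector space `V_n = (ZMod 2)^(2n)` of the n-qubit real Pauli group. -/
abbrev V (n : ℕ) : Type := Fin (2 * n) → ZMod 2

/-- The index `2i-1` (0-based: `2i`). -/
def i0 {n : ℕ} (i : Fin n) : Fin (2 * n) := ⟨2 * i.1, by have := i.isLt; omega⟩

/-- The index `2i` (0-based: `2i+1`). -/
def i1 {n : ℕ} (i : Fin n) : Fin (2 * n) := ⟨2 * i.1 + 1, by have := i.isLt; omega⟩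

/-- The symplectic form `⟨x,y⟩ = Σ_{i=1}^n (x_{2i−1} y_{2i} + x_{2i} y_{2i−1})`. -/
def sform {n : ℕ} (x y : V n) : ZMod 2 :=
  ∑ i : Fin n, (x (i0 i) * y (i1 i) + x (i1 i) * y (i0 i))

/-- The point set `P = V_n \ {0}` of the incidence geometry `G_n`. -/
def P (n : ℕ) : Set (V n) := {x | x ≠ 0}

/-- The line set `L = {{a,b,a+b} : a,b ∈ P, a ≠ b, ⟨a,b⟩ = 0}` of `G_n`. -/
def Lines (n : ℕ) : Set (Set (V n)) :=
  {l | ∃ a b : V n, a ∈ P n ∧ b ∈ P n ∧ a ≠ b ∧ sform a b = 0 ∧ l = {a, b, a + b}}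

/-- A subset `H ⊆ P` satisfies condition (H1) if every line meets it in exactly
one point or is contained in it. -/
def IsH1 {n : ℕ} (H : Set (V n)) : Prop :=
  H ⊆ P n ∧ ∀ l ∈ Lines n, (H ∩ l).ncard = 1 ∨ l ⊆ H

/-- A geometric hyperplane: a subset satisfying (H1) which is not the full point set. -/
def IsHyperplane {n : ℕ} (H : Set (V n)) : Prop := IsH1 H ∧ H ≠ P n

/-- `A ⊞ B`: the complement in `P` of the symmetric difference of `A` and `B`. -/
def boxAdd {n : ℕ} (A B : Set (V n)) : Set (V n) := P n \ (symmDiff A B)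

/-- The quadratic form `Q_0(x) = Σ_{i=1}^n x_{2i−1} x_{2i}`. -/
def Q0 {n : ℕ} (x : V n) : ZMod 2 := ∑ i : Fin n, x (i0 i) * x (i1 i)

/-- The quadratic form `Q_p(x) = Q_0(x) + ⟨p,x⟩`. -/
def Qf {n : ℕ} (p x : V n) : ZMod 2 := Q0 x + sform p x

/-- The perp-set hyperplane `C_p = {x ∈ P : ⟨p,x⟩ = 0}`. -/
def Cset {n : ℕ} (p : V n) : Set (V n) := {x ∈ P n | sform p x = 0}

/-- The quadric hyperplane `H_p = {x ∈ P : Q_p(x) = 0}`. -/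
def Hset {n : ℕ} (p : V n) : Set (V n) := {x ∈ P n | Qf p x = 0}

/-- The symplectic transvection `t_p : x ↦ x + ⟨p,x⟩·p`. -/
def tv {n : ℕ} (p : V n) (x : V n) : V n := x + sform p x • p

open Finset
open QuadraticMap (polar polar_comm polar_add polar_neg)

lemma ZMod.eq_zero_or_eq_one_of_two (u : ZMod 2) : u = 0 ∨ u = 1 := by
  revert u; decide

section SymplecticForm

variable {n : ℕ}

lemma V.add_self (x : V n) : x + x = 0 :=
  funext fun j => CharTwo.add_self_eq_zero (x j)

lemma sform_comm (x y : V n) : sform x y = sform y x :=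
  sum_congr rfl fun _ _ => by ring

lemma sform_add_right (x y z : V n) : sform x (y + z) = sform x y + sform x z := by
  simp only [sform, Pi.add_apply, ← sum_add_distrib]
  exact sum_congr rfl fun _ _ => by ring

lemma sform_add_left (x y z : V n) : sform (x + y) z = sform x z + sform y z := by
  rw [sform_comm, sform_add_right, sform_comm z, sform_comm z]

lemma sform_self (x : V n) : sform x x = 0 :=
  sum_eq_zero fun _ _ => by grind

lemma sform_zero_left (y : V n) : sform 0 y = 0 := by
  simp [sform]

def sformHom : V n →+ V n →+ ZMod 2 :=
  AddMonoidHom.mk' (fun x => AddMonoidHom.mk' (sform x) (sform_add_right x))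
    fun x y => AddMonoidHom.ext fun z => sform_add_left x y z

lemma i0_injective : Function.Injective (i0 (n := n)) := by
  intro i i' h; simp only [i0, Fin.mk.injEq] at h; exact Fin.ext (by omega)

lemma i1_injective : Function.Injective (i1 (n := n)) := by
  intro i i' h; simp only [i1, Fin.mk.injEq] at h; exact Fin.ext (by omega)

lemma i0_ne_i1 (i i' : Fin n) : i0 i ≠ i1 i' := by
  simp only [i0, i1, ne_eq, Fin.mk.injEq]; omega

lemma exists_eq_i0_or_eq_i1 (j : Fin (2 * n)) : ∃ i, j = i0 i ∨ j = i1 i :=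
  ⟨⟨j / 2, by omega⟩, by simp only [i0, i1, Fin.ext_iff]; omega⟩

lemma sform_single_i1 (a : V n) (i : Fin n) : sform a (Pi.single (i1 i) 1) = a (i0 i) := by
  rw [sform, sum_eq_single i]
  · simp [i0_ne_i1]
  · intro i' _ hi'
    simp [i1_injective.ne hi', i0_ne_i1]
  · simp

lemma sform_single_i0 (a : V n) (i : Fin n) : sform a (Pi.single (i0 i) 1) = a (i1 i) := by
  rw [sform, sum_eq_single i]
  · simp [(i0_ne_i1 i i).symm]
  · intro i' _ hi'
    simp [i0_injective.ne hi', (i0_ne_i1 _ _).symm]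
  · simp

lemma exists_sform_eq_one {a : V n} (ha : a ≠ 0) : ∃ y, sform a y = 1 := by
  obtain ⟨j, hj⟩ : ∃ j, a j ≠ 0 := by
    by_contra! h
    exact ha (funext h)
  have hj : a j = 1 := (ZMod.eq_zero_or_eq_one_of_two _).resolve_left hj
  obtain ⟨i, rfl | rfl⟩ := exists_eq_i0_or_eq_i1 j
  · exact ⟨_, (sform_single_i1 a i).trans hj⟩
  · exact ⟨_, (sform_single_i0 a i).trans hj⟩

lemma exists_sform_eq_one_and_sform_eq_one {a a' : V n} (ha : a ≠ 0) (ha' : a' ≠ 0) :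
    ∃ w, sform a w = 1 ∧ sform a' w = 1 := by
  obtain ⟨y, hy⟩ := exists_sform_eq_one ha
  obtain ⟨y', hy'⟩ := exists_sform_eq_one ha'
  by_cases h : sform a' y = 1
  · exact ⟨y, hy, h⟩
  by_cases h' : sform a y' = 1
  · exact ⟨y', h', hy'⟩
  have h : sform a' y = 0 := (ZMod.eq_zero_or_eq_one_of_two _).resolve_right h
  have h' : sform a y' = 0 := (ZMod.eq_zero_or_eq_one_of_two _).resolve_right h'
  exact ⟨y + y', by rw [sform_add_right, hy, h', add_zero],
    by rw [sform_add_right, h, hy', zero_add]⟩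

end SymplecticForm

section Polar

variable {n : ℕ} {f : V n → ZMod 2}

lemma polar_self_add_right (f : V n → ZMod 2) (a b : V n) : polar f a (a + b) = polar f a b := by
  simp only [polar, ← add_assoc, V.add_self, zero_add]
  grind

lemma polar_eq_of_sform_eq_zero (hf : ∀ a b, sform a b = 0 → polar f a b = 0) {a b b' : V n}
    (hbb' : sform b b' = 0) (h : sform a b = sform a b') : polar f a b = polar f a b' := by
  have hperp : sform (a + b) (a + b') = 0 := by
    rw [sform_add_left, sform_add_right, sform_add_right, sform_self, sform_comm b a, h, hbb']
    grind
  have e1 := hf _ _ hperp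
  have e2 := hf _ _ hbb'
  rw [polar, add_add_add_comm, V.add_self, zero_add] at e1
  simp only [polar] at e2 ⊢
  grind

lemma polar_eq_of_sform_eq_one (hf : ∀ a b, sform a b = 0 → polar f a b = 0) {a b b' : V n}
    (hb : sform a b = 1) (hb' : sform a b' = 1) : polar f a b = polar f a b' := by
  by_cases hbb' : sform b b' = 0
  · exact polar_eq_of_sform_eq_zero hf hbb' (hb.trans hb'.symm)
  -- `a + b'` pairs with `a` like `b'` does, and is orthogonal to `b`.
  rw [← polar_self_add_right f a b']
  refine polar_eq_of_sform_eq_zero hf ?_ ?_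
  · rw [sform_add_right, sform_comm b a, hb,
      (ZMod.eq_zero_or_eq_one_of_two _).resolve_left hbb']
    rfl
  · rw [sform_add_right, sform_self, hb, hb', zero_add]

lemma polar_eq_polar_of_sform_eq_one (hf : ∀ a b, sform a b = 0 → polar f a b = 0)
    {a b a' b' : V n} (h : sform a b = 1) (h' : sform a' b' = 1) :
    polar f a b = polar f a' b' := by
  have ha : a ≠ 0 := by rintro rfl; simp [sform_zero_left] at h
  have ha' : a' ≠ 0 := by rintro rfl; simp [sform_zero_left] at h'
  obtain ⟨w, hw, hw'⟩ := exists_sform_eq_one_and_sform_eq_one ha ha'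
  calc polar f a b = polar f a w := polar_eq_of_sform_eq_one hf h hw
    _ = polar f w a := polar_comm f a w
    _ = polar f w a' := polar_eq_of_sform_eq_one hf (by rwa [sform_comm]) (by rwa [sform_comm])
    _ = polar f a' w := polar_comm f w a'
    _ = polar f a' b' := polar_eq_of_sform_eq_one hf hw' h'

theorem exists_polar_eq_mul_sform (hf : ∀ a b, sform a b = 0 → polar f a b = 0) :
    ∃ c : ZMod 2, ∀ a b, polar f a b = c * sform a b := by
  by_cases h : ∃ a₀ b₀ : V n, sform a₀ b₀ = 1
  · obtain ⟨a₀, b₀, h₀⟩ := h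
    refine ⟨polar f a₀ b₀, fun a b => ?_⟩
    by_cases hs : sform a b = 0
    · rw [hs, mul_zero]; exact hf a b hs
    · have hs := (ZMod.eq_zero_or_eq_one_of_two _).resolve_left hs
      rw [hs, mul_one]; exact polar_eq_polar_of_sform_eq_one hf hs h₀
  · push Not at h
    exact ⟨0, fun a b => by
      rw [zero_mul]; exact hf a b ((ZMod.eq_zero_or_eq_one_of_two _).resolve_right (h a b))⟩

end Polar

section CharacterSum

def sgn (u : ZMod 2) : ℤ := (-1) ^ u.val

lemma sgn_add (u v : ZMod 2) : sgn (u + v) = sgn u * sgn v := by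
  fin_cases u <;> fin_cases v <;> rfl

variable {G : Type*} [Fintype G]

lemma sum_sgn_eq_card_sub (f : G → ZMod 2) :
    ∑ x, sgn (f x) = Fintype.card G - 2 * #{x | f x = 1} := by
  have h : ∀ u : ZMod 2, sgn u = 1 - 2 * if u = 1 then 1 else 0 := by decide
  simp only [h, sum_sub_distrib, ← mul_sum, sum_boole, sum_const, card_univ, nsmul_eq_mul,
    mul_one]

variable [AddCommGroup G]

lemma sum_sgn_eq_zero_of_add_eq_add_one (f : G → ZMod 2) {d : G}
    (hd : ∀ x, f (x + d) = f x + 1) : ∑ x, sgn (f x) = 0 := by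
  have h : ∑ x, sgn (f x) = -∑ x, sgn (f x) :=
    calc ∑ x, sgn (f x) = ∑ x, sgn (f (x + d)) :=
          (Equiv.sum_comp (Equiv.addRight d) fun x => sgn (f x)).symm
      _ = -∑ x, sgn (f x) := by
        simp only [hd, sgn_add, show sgn 1 = -1 from rfl, mul_neg_one, sum_neg_distrib]
  linarith

lemma sq_sum_sgn_eq_card (β : G →+ G →+ ZMod 2) (hβ : ∀ a ≠ 0, ∃ d, β a d = 1)
    (f : G → ZMod 2) (hf : ∀ x y, polar f x y = β x y) :
    (∑ x, sgn (f x)) ^ 2 = Fintype.card G := by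
  classical
  have hf0 : f 0 = 0 := by
    have h := hf 0 0
    simp only [polar, add_zero, sub_self, zero_sub, map_zero] at h
    rwa [ZMod.neg_eq_self_mod_two] at h
  have hmul : ∀ x a, sgn (f x) * sgn (f (a + x)) = sgn (f a) * sgn (β a x) := by
    intro x a
    have h := hf a x
    rw [← sgn_add, ← sgn_add]
    simp only [polar] at h
    grind
  have hinner : ∀ a, ∑ x, sgn (β a x) = if a = 0 then (Fintype.card G : ℤ) else 0 := by
    intro a
    split_ifs with ha
    · simp [ha, sgn]
    · obtain ⟨d, hd⟩ := hβ a ha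
      exact sum_sgn_eq_zero_of_add_eq_add_one _ fun x => by
        rw [map_add, hd]
  calc (∑ x, sgn (f x)) ^ 2 = ∑ x, ∑ a, sgn (f x) * sgn (f (a + x)) := by
        rw [pow_two, sum_mul_sum]
        exact sum_congr rfl fun x _ => (Equiv.sum_comp (Equiv.addRight x) _).symm
    _ = ∑ a, sgn (f a) * ∑ x, sgn (β a x) := by
        simp_rw [hmul, mul_sum]
        exact sum_comm
    _ = Fintype.card G := by
        simp only [hinner, mul_ite, mul_zero, sum_ite_eq', mem_univ, if_true, hf0]
        simp [sgn]

end CharacterSum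

section Counting

variable {n : ℕ}

lemma card_V : Fintype.card (V n) = 4 ^ n := by
  simp [pow_mul]

lemma four_pow_le_two_mul_card_add (f : V n → ZMod 2) (c : ZMod 2)
    (hc : ∀ a b, polar f a b = c * sform a b) {d : V n} (hd : f d = 1) :
    4 ^ n ≤ 2 * #{x | f x = 1} + 2 ^ n := by
  have hS : ∑ x, sgn (f x) ≤ 2 ^ n := by
    rcases ZMod.eq_zero_or_eq_one_of_two c with rfl | rfl
    · rw [sum_sgn_eq_zero_of_add_eq_add_one f (d := d) fun x => ?_]
      · positivity
      have h := hc x d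
      simp only [polar, zero_mul] at h
      grind
    · have h := sq_sum_sgn_eq_card sformHom (fun _ => exists_sform_eq_one) f
        fun x y => (hc x y).trans (one_mul _)
      rw [card_V, Nat.cast_pow, Nat.cast_ofNat, show (4 : ℤ) ^ n = (2 ^ n) ^ 2 by
        rw [← pow_mul, mul_comm, pow_mul]; norm_num] at h
      nlinarith [pow_pos (two_pos : (0:ℤ) < 2) n]
  have h := sum_sgn_eq_card_sub f
  rw [card_V] at h
  push_cast at h
  have : (4 : ℤ) ^ n ≤ 2 * #{x | f x = 1} + 2 ^ n := by linarith
  exact_mod_cast this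

lemma four_mul_two_pow_le_four_pow (hn : 2 ≤ n) : 4 * 2 ^ n ≤ 4 ^ n :=
  calc 4 * 2 ^ n = 2 ^ 2 * 2 ^ n := rfl
    _ ≤ 2 ^ n * 2 ^ n := Nat.mul_le_mul_right _ (Nat.pow_le_pow_right two_pos hn)
    _ = 4 ^ n := by rw [← mul_pow]; rfl

end Counting

section Indicator

lemma sum_indicator_one_eq_ncard {α R : Type*} [AddCommMonoidWithOne R] (H : Set α)
    (s : Finset α) : ∑ x ∈ s, H.indicator (1 : α → R) x = ((H ∩ s).ncard : R) := by
  classical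
  have h : H ∩ s = ↑{x ∈ s | x ∈ H} := by
    ext
    simp [and_comm]
  rw [sum_indicator_eq_sum_filter, h, Set.ncard_coe_finset]
  simp

lemma Set.ncard_eq_card_indicator_eq_one {α R : Type*} [Fintype α] [Zero R] [One R]
    [NeZero (1 : R)] [DecidableEq R] (S : Set α) :
    S.ncard = #{x | S.indicator (1 : α → R) x = 1} := by
  classical
  rw [← Set.ncard_coe_finset, coe_filter]
  congr 1
  ext x
  simp [Set.indicator_apply]

variable {n : ℕ} {a b : V n}

lemma IsH1.polar_indicator_eq_one {H : Set (V n)} (hH : IsH1 H) (ha : a ≠ 0) (hb : b ≠ 0)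
    (hab : a ≠ b) (hs : sform a b = 0) : polar (H.indicator (1 : V n → ZMod 2)) a b = 1 := by
  classical
  have hline : ({a, b, a + b} : Set (V n)) ∈ Lines n := ⟨a, b, ha, hb, hab, hs, rfl⟩
  have hca : a + b ≠ a := fun h => hb (by simpa using h)
  have hcb : a + b ≠ b := fun h => ha (by simpa using h)
  have hsum := sum_indicator_one_eq_ncard (R := ZMod 2) H {a, b, a + b}
  rw [sum_insert (by simp [hab, hca.symm]), sum_insert (by simpa using hcb.symm),
    sum_singleton, coe_insert, coe_insert, coe_singleton] at hsum
  have hodd : ((H ∩ {a, b, a + b}).ncard : ZMod 2) = 1 := by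
    rcases hH.2 _ hline with h1 | hsub
    · rw [h1, Nat.cast_one]
    · rw [Set.inter_eq_right.mpr hsub, Set.ncard_eq_three.mpr ⟨a, b, a + b, hab, hca.symm,
        hcb.symm, rfl⟩]
      rfl
  simp only [polar]
  grind

lemma polar_indicator_diff_eq_zero {A B : Set (V n)} (hA : IsH1 A) (hB : IsH1 B) (hAB : A ⊆ B)
    (hs : sform a b = 0) : polar ((B \ A).indicator (1 : V n → ZMod 2)) a b = 0 := by
  have h0 : (B \ A).indicator (1 : V n → ZMod 2) 0 = 0 :=
    Set.indicator_of_notMem (fun h => hB.1 h.1 rfl) _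
  obtain rfl | ha := eq_or_ne a 0
  · simp [polar, h0]
  obtain rfl | hb := eq_or_ne b 0
  · simp [polar, h0]
  obtain rfl | hab := eq_or_ne a b
  · simp only [polar, V.add_self, h0]
    grind
  rw [Set.indicator_sdiff' hAB, polar_add, polar_neg, hB.polar_indicator_eq_one ha hb hab hs,
    hA.polar_indicator_eq_one ha hb hab hs, add_neg_cancel]

end Indicator

theorem stmt3 (n : ℕ) (hn : 2 ≤ n) (A B : Set (V n)) (hA : IsH1 A) (hB : IsH1 B)
    (hAB : A ⊂ B) :
    (3 / 8 : ℚ) * 4 ^ n ≤ ((B \ A).ncard : ℚ) := by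
  obtain ⟨c, hc⟩ := exists_polar_eq_mul_sform fun a b =>
    polar_indicator_diff_eq_zero hA hB hAB.subset
  obtain ⟨d, hdB, hdA⟩ := Set.exists_of_ssubset hAB
  have hcount := four_pow_le_two_mul_card_add _ c hc
    (Set.indicator_of_mem (show d ∈ B \ A from ⟨hdB, hdA⟩) 1)
  rw [← Set.ncard_eq_card_indicator_eq_one] at hcount
  have hcount' : (4 : ℚ) ^ n ≤ 2 * (B \ A).ncard + 2 ^ n := by exact_mod_cast hcount
  have hpow : (4 : ℚ) * 2 ^ n ≤ 4 ^ n := by exact_mod_cast four_mul_two_pow_le_four_pow hn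
  linarith
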